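/- Let X ~ Binomial(n, p) and define Ĥ(θ) = F_B(m_u - 1, m, F_B(nθ⁻, n, X/n)) - F_B(m_l - 1, m, F_B(nθ, n, X/n)) as a function of p through the distribution of X. Then the coverage probability Cover(p) = E[Ĥ] of the parametric bootstrap interval for p satisfies lim_{p→0⁺} Cover(p) = 0 and lim_{p→1⁻} Cover(p) = 0, hence inf_{p∈(0,1)} Cover(p) = 0. -/

import Mathlib

/-- The Binomial(n, p) probability mass at `k`. -/
noncomputable def binomPMF (n k : ℕ) (p : ℝ) : ℝ := (n.choose k : ℝ) * p ^ k * (1 - p) ^ (n - k)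

/-- The CDF of the Binomial(m, p) distribution at the integer `j`. -/
noncomputable def binomCDF (j m : ℕ) (p : ℝ) : ℝ := ∑ k ∈ Finset.range (j + 1), binomPMF m k p

/-- The Binomial(n, p) CDF at a real threshold `t`: `P(X ≤ t)`. -/
noncomputable def binomCDFle (t : ℝ) (n : ℕ) (p : ℝ) : ℝ :=
  ∑ k ∈ Finset.range (n + 1), if (k : ℝ) ≤ t then binomPMF n k p else 0

/-- The left limit of the Binomial(n, p) CDF at a real threshold `t`: `P(X < t)`. -/
noncomputable def binomCDFlt (t : ℝ) (n : ℕ) (p : ℝ) : ℝ :=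
  ∑ k ∈ Finset.range (n + 1), if (k : ℝ) < t then binomPMF n k p else 0

/-- The coverage probability of the parametric bootstrap interval for a binomial
proportion `p`:
`Cover(p) = ∑_{x=0}^n [F_B(m_u-1, m, F_B(np⁻, n, x/n)) - F_B(m_l-1, m, F_B(np, n, x/n))]
  p_B(x, n, p)`. -/
noncomputable def Cover (n m m_l m_u : ℕ) (p : ℝ) : ℝ :=
  ∑ x ∈ Finset.range (n + 1),
    (binomCDF (m_u - 1) m (binomCDFlt (n * p) n ((x : ℝ) / n)) -
      binomCDF (m_l - 1) m (binomCDFle (n * p) n ((x : ℝ) / n))) * binomPMF n x p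

/-!
On `0 < p < 1/n` the threshold `n p` lies in `(0, 1)`, so both bootstrap CDFs `F_B(np⁻, n, x/n)`
and `F_B(np, n, x/n)` equal `F_B(0, n, x/n)` and `Cover` is a polynomial in `p`. At `p = 0` the
binomial weights concentrate on `x = 0`, where `F_B(0, n, 0) = 1` and hence both outer CDFs
vanish; symmetrically near `p = 1` with `F_B(n - 1, n, ·)` and `x = n`. Since the binomial CDF
is antitone in the success probability, `Cover ≥ 0`, so the infimum is the limit `0`.
-/

open Filter Set Topology Polynomial

lemma binomPMF_eq_eval_bernsteinPolynomial (n k : ℕ) (q : ℝ) :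
    binomPMF n k q = (bernsteinPolynomial ℝ n k).eval q := by
  simp [binomPMF, bernsteinPolynomial]

lemma binomCDF_eq_eval_sum_bernsteinPolynomial (j m : ℕ) (q : ℝ) :
    binomCDF j m q = (∑ k ∈ Finset.range (j + 1), bernsteinPolynomial ℝ m k).eval q := by
  simp [binomCDF, eval_finsetSum, binomPMF_eq_eval_bernsteinPolynomial]

lemma binomPMF_nonneg (n k : ℕ) {q : ℝ} (hq : q ∈ Icc 0 1) : 0 ≤ binomPMF n k q := by
  obtain ⟨hq₀, hq₁⟩ := hq
  have : 0 ≤ 1 - q := sub_nonneg.2 hq₁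
  unfold binomPMF
  positivity

lemma sum_binomPMF (n : ℕ) (q : ℝ) : ∑ k ∈ Finset.range (n + 1), binomPMF n k q = 1 := by
  simp [binomPMF_eq_eval_bernsteinPolynomial, ← eval_finsetSum, bernsteinPolynomial.sum]

lemma binomPMF_zero_right (n x : ℕ) : binomPMF n x 0 = if x = 0 then 1 else 0 := by
  rw [binomPMF_eq_eval_bernsteinPolynomial, bernsteinPolynomial.eval_at_0]

lemma binomPMF_one_right (n x : ℕ) : binomPMF n x 1 = if x = n then 1 else 0 := by
  rw [binomPMF_eq_eval_bernsteinPolynomial, bernsteinPolynomial.eval_at_1]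

lemma binomCDF_zero_right (j m : ℕ) : binomCDF j m 0 = 1 := by
  simp [binomCDF, binomPMF_zero_right]

lemma binomCDF_one_right {j m : ℕ} (hj : j < m) : binomCDF j m 1 = 0 := by
  refine Finset.sum_eq_zero fun k hk => ?_
  rw [Finset.mem_range] at hk
  rw [binomPMF_one_right, if_neg (by omega)]

lemma derivative_sum_bernsteinPolynomial (R : Type*) [CommRing R] (m j : ℕ) :
    derivative (∑ k ∈ Finset.range (j + 1), bernsteinPolynomial R m k) =
      -(m * bernsteinPolynomial R (m - 1) j) := by
  induction j with
  | zero => simp [bernsteinPolynomial.derivative_zero]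
  | succ j ih =>
    rw [Finset.sum_range_succ, derivative_add, ih, bernsteinPolynomial.derivative_succ]
    ring

lemma hasDerivAt_binomCDF (j m : ℕ) (q : ℝ) :
    HasDerivAt (fun q => binomCDF j m q) (-(m * binomPMF (m - 1) j q)) q := by
  simp only [binomCDF_eq_eval_sum_bernsteinPolynomial, binomPMF_eq_eval_bernsteinPolynomial]
  exact (Polynomial.hasDerivAt _ q).congr_deriv (by
    rw [derivative_sum_bernsteinPolynomial, eval_neg, eval_mul, eval_natCast])

lemma binomCDF_antitoneOn (j m : ℕ) : AntitoneOn (binomCDF j m) (Icc 0 1) :=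
  antitoneOn_of_hasDerivWithinAt_nonpos (convex_Icc 0 1)
    (fun q _ => (hasDerivAt_binomCDF j m q).continuousAt.continuousWithinAt)
    (fun q _ => (hasDerivAt_binomCDF j m q).hasDerivWithinAt) fun _ hq =>
      neg_nonpos.2 (mul_nonneg m.cast_nonneg (binomPMF_nonneg _ _ (interior_subset hq)))

lemma binomCDF_mono_left (m : ℕ) {j j' : ℕ} (hj : j ≤ j') {q : ℝ} (hq : q ∈ Icc 0 1) :
    binomCDF j m q ≤ binomCDF j' m q :=
  Finset.sum_le_sum_of_subset_of_nonneg (Finset.range_subset_range.2 (by omega))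
    fun k _ _ => binomPMF_nonneg m k hq

lemma binomCDF_le_binomCDF {j j' m : ℕ} (hj : j ≤ j') {a b : ℝ} (ha : a ∈ Icc 0 1)
    (hb : b ∈ Icc 0 1) (hab : a ≤ b) : binomCDF j m b ≤ binomCDF j' m a :=
  (binomCDF_mono_left m hj hb).trans (binomCDF_antitoneOn j' m ha hb hab)

section Thresholds

variable {P : ℕ → Prop} [DecidablePred P] {n j : ℕ} {t q : ℝ}

lemma sum_ite_binomPMF_mem_Icc (hq : q ∈ Icc 0 1) :
    ∑ k ∈ Finset.range (n + 1), (if P k then binomPMF n k q else 0) ∈ Icc 0 1 := by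
  refine ⟨Finset.sum_nonneg fun k _ => ?_, (sum_binomPMF n q).le.trans' ?_⟩
  · split_ifs
    exacts [binomPMF_nonneg n k hq, le_rfl]
  · exact Finset.sum_le_sum fun k _ => by split_ifs; exacts [le_rfl, binomPMF_nonneg n k hq]

lemma sum_ite_binomPMF_eq_binomCDF (hP : ∀ k, P k ↔ k ≤ j) (hj : j ≤ n) :
    ∑ k ∈ Finset.range (n + 1), (if P k then binomPMF n k q else 0) = binomCDF j n q := by
  rw [← Finset.sum_filter, binomCDF]
  congr 1
  ext k
  simp only [Finset.mem_filter, Finset.mem_range, hP]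
  omega

lemma binomCDFlt_le_binomCDFle (hq : q ∈ Icc 0 1) : binomCDFlt t n q ≤ binomCDFle t n q :=
  Finset.sum_le_sum fun k _ => by split_ifs <;> first | linarith | exact binomPMF_nonneg n k hq

lemma binomCDFlt_eq_binomCDF (hj : j ≤ n) (ht : t ∈ Ioo (j : ℝ) (j + 1)) :
    binomCDFlt t n q = binomCDF j n q :=
  sum_ite_binomPMF_eq_binomCDF (fun _ =>
    ⟨fun hk => Nat.lt_add_one_iff.1 (by exact_mod_cast hk.trans ht.2),
      fun hk => (Nat.cast_le (α := ℝ).2 hk).trans_lt ht.1⟩) hj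

lemma binomCDFle_eq_binomCDF (hj : j ≤ n) (ht : t ∈ Ioo (j : ℝ) (j + 1)) :
    binomCDFle t n q = binomCDF j n q :=
  sum_ite_binomPMF_eq_binomCDF (fun _ =>
    ⟨fun hk => Nat.lt_add_one_iff.1 (by exact_mod_cast hk.trans_lt ht.2),
      fun hk => (Nat.cast_le (α := ℝ).2 hk).trans ht.1.le⟩) hj

lemma binomCDFlt_mem_Icc (hq : q ∈ Icc 0 1) : binomCDFlt t n q ∈ Icc 0 1 :=
  sum_ite_binomPMF_mem_Icc hq

lemma binomCDFle_mem_Icc (hq : q ∈ Icc 0 1) : binomCDFle t n q ∈ Icc 0 1 :=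
  sum_ite_binomPMF_mem_Icc hq

end Thresholds

lemma natCast_div_mem_Icc {x n : ℕ} (hx : x ≤ n) : (x : ℝ) / n ∈ Icc 0 1 :=
  ⟨by positivity, div_le_one_of_le₀ (by exact_mod_cast hx) n.cast_nonneg⟩

lemma Cover_nonneg {n m m_l m_u : ℕ} (h : m_l ≤ m_u) {p : ℝ} (hp : p ∈ Icc 0 1) :
    0 ≤ Cover n m m_l m_u p := by
  refine Finset.sum_nonneg fun x hx => mul_nonneg (sub_nonneg.2 ?_) (binomPMF_nonneg n x hp)
  have hq := natCast_div_mem_Icc (Nat.lt_succ_iff.1 (Finset.mem_range.1 hx))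
  exact binomCDF_le_binomCDF (by omega) (binomCDFlt_mem_Icc hq) (binomCDFle_mem_Icc hq)
    (binomCDFlt_le_binomCDFle hq)

lemma continuous_sum_mul_binomPMF (n : ℕ) (f : ℕ → ℝ) :
    Continuous fun p => ∑ x ∈ Finset.range (n + 1), f x * binomPMF n x p := by
  unfold binomPMF
  fun_prop

lemma sum_mul_binomPMF_zero (n : ℕ) (f : ℕ → ℝ) :
    ∑ x ∈ Finset.range (n + 1), f x * binomPMF n x 0 = f 0 := by
  simp [binomPMF_zero_right]

lemma sum_mul_binomPMF_one (n : ℕ) (f : ℕ → ℝ) :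
    ∑ x ∈ Finset.range (n + 1), f x * binomPMF n x 1 = f n := by
  simp [binomPMF_one_right]

/-- `Cover` on the region `j < n p < j + 1`, where it is a polynomial in `p`. -/
noncomputable def coverOfFloor (n m m_l m_u j : ℕ) (p : ℝ) : ℝ :=
  ∑ x ∈ Finset.range (n + 1),
    (binomCDF (m_u - 1) m (binomCDF j n ((x : ℝ) / n)) -
      binomCDF (m_l - 1) m (binomCDF j n ((x : ℝ) / n))) * binomPMF n x p

lemma Cover_eq_coverOfFloor {n m m_l m_u j : ℕ} (hj : j ≤ n) {p : ℝ}
    (hp : (n : ℝ) * p ∈ Ioo (j : ℝ) (j + 1)) :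
    Cover n m m_l m_u p = coverOfFloor n m m_l m_u j p := by
  simp only [Cover, coverOfFloor, binomCDFlt_eq_binomCDF hj hp, binomCDFle_eq_binomCDF hj hp]

lemma tendsto_Cover {n m m_l m_u j : ℕ} (hj : j ≤ n) {l : Filter ℝ} {p₀ : ℝ} (hl : l ≤ 𝓝 p₀)
    (hp : ∀ᶠ p in l, (n : ℝ) * p ∈ Ioo (j : ℝ) (j + 1)) :
    Tendsto (Cover n m m_l m_u) l (𝓝 (coverOfFloor n m m_l m_u j p₀)) :=
  (((continuous_sum_mul_binomPMF n _).tendsto p₀).mono_left hl).congr'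
    (hp.mono fun _ hp => (Cover_eq_coverOfFloor hj hp).symm)

lemma csInf_image_Ioo_eq_of_tendsto {f : ℝ → ℝ} {a b c : ℝ} (hab : a < b)
    (hf : ∀ x ∈ Ioo a b, c ≤ f x) (h : Tendsto f (𝓝[>] a) (𝓝 c)) : sInf (f '' Ioo a b) = c := by
  have hbdd : BddBelow (f '' Ioo a b) := ⟨c, forall_mem_image.2 hf⟩
  refine le_antisymm (ge_of_tendsto h ?_) (le_csInf ((nonempty_Ioo.2 hab).image f)
    (forall_mem_image.2 hf))
  filter_upwards [Ioo_mem_nhdsGT hab] with x hx using csInf_le hbdd (mem_image_of_mem f hx)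

section Limits

variable {n m m_l m_u : ℕ}

lemma tendsto_Cover_nhdsGT_zero (hn : 0 < n) (h : m_l < m_u) (hm : m_u ≤ m) :
    Tendsto (Cover n m m_l m_u) (𝓝[>] 0) (𝓝 0) := by
  have hn' : (0 : ℝ) < n := by exact_mod_cast hn
  have hp : ∀ᶠ p in 𝓝[>] (0 : ℝ), (n : ℝ) * p ∈ Ioo ((0 : ℕ) : ℝ) ((0 : ℕ) + 1) := by
    filter_upwards [Ioo_mem_nhdsGT (inv_pos.2 hn')] with p hp
    rw [Nat.cast_zero, zero_add]
    exact ⟨mul_pos hn' hp.1, (mul_lt_mul_of_pos_left hp.2 hn').trans_eq (mul_inv_cancel₀ hn'.ne')⟩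
  simpa [coverOfFloor, sum_mul_binomPMF_zero, binomCDF_zero_right,
    binomCDF_one_right (by omega : m_u - 1 < m), binomCDF_one_right (by omega : m_l - 1 < m)]
    using tendsto_Cover (m := m) (m_l := m_l) (m_u := m_u) n.zero_le nhdsWithin_le_nhds hp

lemma tendsto_Cover_nhdsLT_one (hn : 0 < n) :
    Tendsto (Cover n m m_l m_u) (𝓝[<] 1) (𝓝 0) := by
  have hn' : (0 : ℝ) < n := by exact_mod_cast hn
  have hp : ∀ᶠ p in 𝓝[<] (1 : ℝ), (n : ℝ) * p ∈ Ioo ((n - 1 : ℕ) : ℝ) ((n - 1 : ℕ) + 1) := by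
    filter_upwards [Ioo_mem_nhdsLT (sub_lt_self 1 (inv_pos.2 hn'))] with p hp
    rw [Nat.cast_sub hn, Nat.cast_one, sub_add_cancel]
    refine ⟨?_, mul_lt_of_lt_one_right hn' hp.2⟩
    simpa [mul_sub, mul_inv_cancel₀ hn'.ne'] using mul_lt_mul_of_pos_left hp.1 hn'
  simpa [coverOfFloor, sum_mul_binomPMF_one, div_self hn'.ne', binomCDF_zero_right,
    binomCDF_one_right (by omega : n - 1 < n)]
    using tendsto_Cover (m := m) (m_l := m_l) (m_u := m_u) (n.sub_le 1) nhdsWithin_le_nhds hp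

end Limits

theorem stmt13_general (n m m_l m_u : ℕ) (hn : 1 ≤ n) (h2 : m_l < m_u) (h3 : m_u ≤ m) :
    Filter.Tendsto (Cover n m m_l m_u) (nhdsWithin 0 (Set.Ioi 0)) (nhds 0) ∧
    Filter.Tendsto (Cover n m m_l m_u) (nhdsWithin 1 (Set.Iio 1)) (nhds 0) ∧
    sInf (Cover n m m_l m_u '' Set.Ioo 0 1) = 0 := by
  have hlim₀ := tendsto_Cover_nhdsGT_zero hn h2 h3
  exact ⟨hlim₀, tendsto_Cover_nhdsLT_one hn, csInf_image_Ioo_eq_of_tendsto one_pos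
    (fun p hp => Cover_nonneg h2.le (Ioo_subset_Icc_self hp)) hlim₀⟩

/-- The coverage probability tends to `0` as `p → 0⁺` and as `p → 1⁻`, and hence its
infimum over `p ∈ (0,1)` is `0`. -/
theorem stmt13 (n m m_l m_u : ℕ) (hn : 1 ≤ n) (h1 : 1 ≤ m_l) (h2 : m_l < m_u) (h3 : m_u ≤ m) :
    Filter.Tendsto (Cover n m m_l m_u) (nhdsWithin 0 (Set.Ioi 0)) (nhds 0) ∧
    Filter.Tendsto (Cover n m m_l m_u) (nhdsWithin 1 (Set.Iio 1)) (nhds 0) ∧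
    sInf (Cover n m m_l m_u '' Set.Ioo 0 1) = 0 :=
  stmt13_general n m m_l m_u hn h2 h3
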